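/- For every integer n ≥ 1, Φ(3,n) equals the number of double partitions of n, i.e. the number of finite multisets of nonzero integer partitions whose total sum (of all parts of all members, with multiplicity) equals n. -/

import Mathlib

/-- A fission chain of slope `≤ k` with `n` leaves: a chain of surjective maps of
finite sets `J₁ ↠ J₂ ↠ ⋯ ↠ J_{k+1}` with `|J₁| = n` and `|J_{k+1}| = 1`.
We encode `J_{i+1} := Fin (size i)`; the chain is prolonged trivially above
height `k+1` (all later sets necessarily also have one element, since all the
maps are surjective). -/
structure FChain (k n : ℕ) where
  size : ℕ → ℕ
  map : ∀ i, Fin (size i) → Fin (size (i+1))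
  surj : ∀ i, Function.Surjective (map i)
  size_zero : size 0 = n
  size_top : size k = 1

/-- A fission chain of slope `≤ k` has slope exactly `k` if `k = 0` or `|J_k| ≥ 2`
(here `J_k = Fin (size (k-1))`). -/
def FChain.ExactSlope {k n : ℕ} (c : FChain k n) : Prop :=
  k = 0 ∨ 2 ≤ c.size (k - 1)

/-- Isomorphism of fission chains: bijections between the corresponding sets
commuting with all the maps. -/
def FChain.Iso {k n m : ℕ} (c : FChain k n) (d : FChain k m) : Prop :=
  ∃ e : ∀ i, Fin (c.size i) ≃ Fin (d.size i),
    ∀ i x, e (i+1) (c.map i x) = d.map i (e i x)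

/-- `Φ(k,n)`: the number of isomorphism classes of fission chains of slope `≤ k`
with `n` leaves. -/
noncomputable def PhiBig (k n : ℕ) : ℕ :=
  Nat.card (Quot (fun c d : FChain k n => c.Iso d))

/-- `φ(k,n)`: the number of isomorphism classes of fission chains of slope
exactly `k` with `n` leaves. -/
noncomputable def phi (k n : ℕ) : ℕ :=
  Nat.card (Quot (fun c d : {c : FChain k n // c.ExactSlope} => c.1.Iso d.1))

open Finset

namespace FCaux

variable {α α' β β' γ X : Type*}

/-- The fiber of `f` over `b`, as a `Finset`, using classical decidability. -/
noncomputable def fib [Fintype α] (f : α → β) (b : β) : Finset α :=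
  @Finset.filter _ (fun a => f a = b) (fun _ => Classical.propDecidable _) Finset.univ

lemma mem_fib [Fintype α] {f : α → β} {b : β} {a : α} : a ∈ fib f b ↔ f a = b := by
  simp [fib]

/-- Cardinality of the fiber. -/
noncomputable def fcard [Fintype α] (f : α → β) (b : β) : ℕ := (fib f b).card

/-- Multiset of values of `w` on the fiber of `f` over `b`. -/
noncomputable def fibm [Fintype α] (f : α → β) (w : α → X) (b : β) : Multiset X :=
  (fib f b).val.map w

/-- Multiset of all values of `w`. -/
noncomputable def tm [Fintype α] (w : α → X) : Multiset X := Finset.univ.val.map w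

lemma fcard_eq [Fintype α] (f : α → β) (b : β) :
    fcard f b = Nat.card {a // f a = b} := by
  classical
  rw [Nat.card_eq_fintype_card, Fintype.card_subtype, fcard]
  congr 1

lemma count_tm [Fintype α] [DecidableEq X] (w : α → X) (x : X) :
    (tm w).count x = Nat.card {a // w a = x} := by
  classical
  rw [Nat.card_eq_fintype_card, Fintype.card_subtype, tm, Multiset.count_map,
    Finset.card_def, Finset.filter_val]
  exact congrArg Multiset.card (@Multiset.filter_congr _ _ _ _ _ _ (fun a _ => eq_comm))

lemma card_fibm [Fintype α] (f : α → β) (w : α → X) (b : β) :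
    Multiset.card (fibm f w b) = fcard f b := by
  rw [fibm, Multiset.card_map]; rfl

lemma sum_fibm [Fintype α] (f : α → β) (w : α → ℕ) (b : β) :
    (fibm f w b).sum = ∑ a ∈ fib f b, w a := rfl

lemma fcard_congr [Fintype α] {f : α → β} {g : α → γ} {b : β} {c : γ}
    (h : ∀ a, f a = b ↔ g a = c) : fcard f b = fcard g c := by
  rw [fcard_eq, fcard_eq]
  exact Nat.card_congr (Equiv.subtypeEquivRight h)

lemma fibm_const [Fintype α] (f : α → β) (x : X) (b : β) :
    fibm f (fun _ => x) b = Multiset.replicate (fcard f b) x := by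
  rw [fibm, Multiset.map_const']; rfl

lemma tm_equiv [Fintype α] [Fintype α'] {F : α → X} {G : α' → X} (e : α ≃ α')
    (h : ∀ a, G (e a) = F a) : tm G = tm F := by
  rw [tm, tm, ← Finset.map_univ_equiv e, Finset.map_val, Multiset.map_map]
  exact Multiset.map_congr rfl (fun a _ => h a)

lemma fib_eq_map_subtype [Fintype α] {f : α → β} {b : β} [Fintype {a // f a = b}] :
    fib f b = Finset.univ.map (Function.Embedding.subtype (fun a => f a = b)) := by
  ext a
  simp only [mem_fib, Finset.mem_map, Function.Embedding.coe_subtype, Finset.mem_univ,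
    true_and]
  constructor
  · intro h; exact ⟨⟨a, h⟩, rfl⟩
  · rintro ⟨⟨a', h⟩, rfl⟩; exact h

lemma fibm_eq_tm [Fintype α] (f : α → β) (w : α → X) (b : β) [Fintype {a // f a = b}] :
    fibm f w b = tm (fun a : {a // f a = b} => w a.1) := by
  rw [fibm, fib_eq_map_subtype, Finset.map_val, Multiset.map_map]
  rfl

lemma fcard_equiv [Fintype α] [Fintype α'] (e : α ≃ α') {F : α → X} {G : α' → X}
    (h : ∀ a, G (e a) = F a) (x : X) : fcard G x = fcard F x := by
  rw [fcard_eq, fcard_eq]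
  exact Nat.card_congr
    (Equiv.subtypeEquiv e (fun a => by rw [h a])).symm

/-- Core classification: two functions with the same total value multiset are
conjugate by a bijection. -/
lemma core [Fintype α] [Fintype α'] {F : α → X} {G : α' → X}
    (h : tm F = tm G) : ∃ e : α ≃ α', ∀ a, G (e a) = F a := by
  classical
  have hc : ∀ x, Nat.card {a // F a = x} = Nat.card {a' // G a' = x} := by
    intro x
    rw [← count_tm (w := F), ← count_tm (w := G), h]
  have eq : ∀ x, {a // F a = x} ≃ {a' // G a' = x} := fun x =>
    Fintype.equivOfCardEq (by
      have := hc x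
      rwa [Nat.card_eq_fintype_card, Nat.card_eq_fintype_card] at this)
  refine ⟨(Equiv.sigmaFiberEquiv F).symm.trans
    ((Equiv.sigmaCongrRight eq).trans (Equiv.sigmaFiberEquiv G)), fun a => ?_⟩
  exact (eq (F a) ⟨a, rfl⟩).2

/-- Weighted step: transfer a bijection one level down a chain. -/
lemma stepw [Fintype α] [Fintype α'] {f : α → β} {f' : α' → β'} (eb : β ≃ β')
    {w : α → X} {w' : α' → X}
    (h : ∀ b, fibm f' w' (eb b) = fibm f w b) :
    ∃ e : α ≃ α', (∀ a, f' (e a) = eb (f a)) ∧ ∀ a, w' (e a) = w a := by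
  classical
  have key : ∀ b : β, ∃ ψ : {a // f a = b} ≃ {a' // f' a' = eb b},
      ∀ a, w' (ψ a).1 = w (a : {a // f a = b}).1 := by
    intro b
    have hb := h b
    rw [fibm_eq_tm f' w' (eb b), fibm_eq_tm f w b] at hb
    exact core hb.symm
  choose ψ hψ using key
  refine ⟨(Equiv.sigmaFiberEquiv f).symm.trans
    ((Equiv.sigmaCongr eb ψ).trans (Equiv.sigmaFiberEquiv f')), fun a => ?_, fun a => ?_⟩
  · exact (ψ (f a) ⟨a, rfl⟩).2
  · exact hψ (f a) ⟨a, rfl⟩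

/-- Transport of fiber multisets along a commuting square of bijections. -/
lemma fibm_trans [Fintype α] [Fintype α'] {f : α → β} {f' : α' → β'}
    (e : α ≃ α') (e' : β ≃ β') {w : α → X} {w' : α' → X}
    (hc : ∀ a, f' (e a) = e' (f a)) (hw : ∀ a, w' (e a) = w a) (b : β) :
    fibm f' w' (e' b) = fibm f w b := by
  classical
  rw [fibm_eq_tm, fibm_eq_tm]
  refine tm_equiv (Equiv.subtypeEquiv e (fun a => ?_)) (fun a => hw a.1)
  rw [hc a]
  exact (EmbeddingLike.apply_eq_iff_eq e').symm

lemma fcard_trans [Fintype α] [Fintype α'] {f : α → β} {f' : α' → β'}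
    (e : α ≃ α') (e' : β ≃ β')
    (hc : ∀ a, f' (e a) = e' (f a)) (b : β) :
    fcard f' (e' b) = fcard f b := by
  have h1 : fcard f' (e' b) = fcard (fun a => e' (f a)) (e' b) :=
    fcard_equiv e hc (e' b)
  rw [h1]
  exact fcard_congr (fun a => (EmbeddingLike.apply_eq_iff_eq e'))

end FCaux

namespace FCaux

variable {α α' β β' γ γ' : Type*}

/-- Package a nonempty multiset of positive naturals as a "nonzero partition". -/
noncomputable def mkQ (s : Multiset ℕ) (h : ∀ x ∈ s, 0 < x) (hs : s ≠ 0) :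
    {q : Σ m : ℕ, Nat.Partition m // q.1 ≠ 0} :=
  ⟨⟨s.sum, ⟨s, fun {i} hi => h i hi, rfl⟩⟩, by
    obtain ⟨x, hx⟩ := Multiset.exists_mem_of_ne_zero hs
    obtain ⟨t, rfl⟩ := Multiset.exists_cons_of_mem hx
    simp only [Multiset.sum_cons, ne_eq]
    have := h x (Multiset.mem_cons_self x t)
    omega⟩

lemma mkQ_eq_of {s s' : Multiset ℕ} (h : s = s') (h1 h1' h2 h2') :
    mkQ s h1 h2 = mkQ s' h1' h2' := by subst h; rfl

lemma parts_mkQ (s : Multiset ℕ) (h1 h2) : (mkQ s h1 h2).1.2.parts = s := rfl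

lemma mkQ_self (q : {q : Σ m : ℕ, Nat.Partition m // q.1 ≠ 0}) (h1 h2) :
    mkQ q.1.2.parts h1 h2 = q := by
  obtain ⟨⟨m, p⟩, hm⟩ := q
  obtain ⟨parts, pos, psum⟩ := p
  apply Subtype.ext
  show (⟨Multiset.sum parts, _⟩ : Σ m : ℕ, Nat.Partition m) = _
  subst psum
  rfl

section chains

variable [Fintype α] [Fintype β] [Fintype γ] [Fintype α'] [Fintype β'] [Fintype γ']

/-- The multiset of `f`-fiber sizes over the `g`-fiber of `b`. -/
noncomputable def pA (f : α → β) (g : β → γ) (b : γ) : Multiset ℕ :=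
  fibm g (fcard f) b

lemma pA_pos {f : α → β} (g : β → γ) (hf : Function.Surjective f) (b : γ) :
    ∀ x ∈ pA f g b, 0 < x := by
  intro x hx
  rw [pA, fibm] at hx
  obtain ⟨a, _, rfl⟩ := Multiset.mem_map.mp hx
  obtain ⟨y, hy⟩ := hf a
  exact Finset.card_pos.mpr ⟨y, mem_fib.mpr hy⟩

lemma pA_ne (f : α → β) {g : β → γ} (hg : Function.Surjective g) (b : γ) :
    pA f g b ≠ 0 := by
  obtain ⟨a, ha⟩ := hg b
  intro h0
  rw [pA, fibm, Multiset.map_eq_zero] at h0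
  exact Finset.ne_empty_of_mem (mem_fib.mpr ha) (Finset.val_eq_zero.mp h0)

/-- The invariant of a two-step chain: a multiset of nonzero partitions. -/
noncomputable def rawInv (f : α → β) (g : β → γ) (hf : Function.Surjective f)
    (hg : Function.Surjective g) : Multiset {q : Σ m : ℕ, Nat.Partition m // q.1 ≠ 0} :=
  tm (fun b : γ => mkQ (pA f g b) (pA_pos g hf b) (pA_ne f hg b))

lemma pA_sum (f : α → β) (g : β → γ) (b : γ) :
    (pA f g b).sum = fcard (fun x => g (f x)) b := by
  classical
  rw [pA, sum_fibm, fcard]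
  rw [show (fib (fun x => g (f x)) b).card =
      ∑ a ∈ fib g b, ((fib (fun x => g (f x)) b).filter (fun x => f x = a)).card from
    Finset.card_eq_sum_card_fiberwise (fun x hx => mem_fib.mpr (by
      rw [Finset.mem_coe, mem_fib] at hx; exact hx))]
  · refine Finset.sum_congr rfl (fun a ha => ?_)
    rw [fcard]
    congr 1
    ext x
    rw [Finset.mem_filter, mem_fib, mem_fib]
    rw [mem_fib] at ha
    constructor
    · rintro hfx; exact ⟨by rw [hfx]; exact ha, hfx⟩
    · rintro ⟨_, hfx⟩; exact hfx

lemma rawInv_sum (f : α → β) (g : β → γ) (hf) (hg) :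
    ((rawInv f g hf hg).map (fun q => q.1.1)).sum = Fintype.card α := by
  classical
  rw [rawInv, tm, Multiset.map_map]
  have h1 : ∀ b : γ, ((fun q => q.1.1) ∘
      (fun b => mkQ (pA f g b) (pA_pos g hf b) (pA_ne f hg b))) b =
      fcard (fun x => g (f x)) b := fun b => pA_sum f g b
  rw [Multiset.map_congr rfl (fun b _ => h1 b)]
  rw [show (Finset.univ.val.map (fcard (fun x => g (f x)))).sum =
    ∑ b : γ, fcard (fun x => g (f x)) b from rfl]
  rw [show Fintype.card α = (Finset.univ : Finset α).card from rfl]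
  rw [Finset.card_eq_sum_card_fiberwise (f := fun x => g (f x)) (t := Finset.univ)
    (fun x _ => Finset.mem_univ _)]
  refine Finset.sum_congr rfl (fun b _ => ?_)
  rw [fcard]
  congr 1

/-- The invariant is preserved by isomorphisms of chains. -/
lemma rawInv_trans (e0 : α ≃ α') (e1 : β ≃ β') (e2 : γ ≃ γ')
    {f : α → β} {g : β → γ} {f' : α' → β'} {g' : β' → γ'}
    (sq0 : ∀ a, f' (e0 a) = e1 (f a)) (sq1 : ∀ b, g' (e1 b) = e2 (g b))
    (hf hg hf' hg') :
    rawInv f' g' hf' hg' = rawInv f g hf hg := by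
  refine tm_equiv e2 (fun b => ?_)
  exact mkQ_eq_of (fibm_trans e1 e2 sq1 (fun a => fcard_trans e0 e1 sq0 a) b) _ _ _ _

end chains

end FCaux

namespace FCaux

lemma size_one_succ {k n : ℕ} (c : FChain k n) (i : ℕ) (h : c.size i = 1) :
    c.size (i+1) = 1 := by
  have h1 : c.size (i+1) ≤ 1 := by
    have := Fintype.card_le_of_surjective _ (c.surj i)
    simpa [h] using this
  have h2 : 0 < c.size (i+1) := (c.map i ⟨0, by omega⟩).pos
  omega

lemma size_add {k n : ℕ} (c : FChain k n) : ∀ j, c.size (k + j) = 1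
  | 0 => c.size_top
  | j+1 => size_one_succ c _ (size_add c j)

lemma size_ge {k n : ℕ} (c : FChain k n) (i : ℕ) (h : k ≤ i) : c.size i = 1 := by
  have := size_add c (i - k)
  rwa [Nat.add_sub_cancel' h] at this

/-- The invariant of a fission chain of slope ≤ 3. -/
noncomputable def cInv {n : ℕ} (c : FChain 3 n) :
    Multiset {q : Σ m : ℕ, Nat.Partition m // q.1 ≠ 0} :=
  rawInv (c.map 0) (c.map 1) (c.surj 0) (c.surj 1)

lemma cInv_sum {n : ℕ} (c : FChain 3 n) :
    ((cInv c).map (fun q => q.1.1)).sum = n := by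
  rw [cInv, rawInv_sum, Fintype.card_fin, c.size_zero]

lemma cInv_iso {n m : ℕ} {c : FChain 3 n} {d : FChain 3 m} (h : c.Iso d) :
    cInv c = cInv d := by
  obtain ⟨e, he⟩ := h
  exact (rawInv_trans (e 0) (e 1) (e 2)
    (fun a => (he 0 a).symm) (fun b => (he 1 b).symm) _ _ _ _).symm

lemma crux {n m : ℕ} {c : FChain 3 n} {d : FChain 3 m} (h : cInv c = cInv d) :
    c.Iso d := by
  classical
  rw [cInv, cInv, rawInv, rawInv] at h
  obtain ⟨e2, he2⟩ := core h
  have hp : ∀ b, pA (d.map 0) (d.map 1) (e2 b) = pA (c.map 0) (c.map 1) b := by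
    intro b
    have := he2 b
    have := congrArg (fun q : {q : Σ m : ℕ, Nat.Partition m // q.1 ≠ 0} =>
      q.1.2.parts) this
    simpa [parts_mkQ] using this
  obtain ⟨e1, sq1, hw1⟩ := stepw (f := c.map 1) (f' := d.map 1)
    (w := fcard (c.map 0)) (w' := fcard (d.map 0)) e2 hp
  obtain ⟨e0, sq0, -⟩ := stepw (f := c.map 0) (f' := d.map 0)
    (w := fun _ => (0:ℕ)) (w' := fun _ => (0:ℕ)) e1 (fun a => by
      rw [fibm_const, fibm_const, hw1 a])
  have hc3 : ∀ j, c.size (3 + j) = 1 := size_add c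
  have hd3 : ∀ j, d.size (3 + j) = 1 := size_add d
  refine ⟨fun i => match i with
    | 0 => e0
    | 1 => e1
    | 2 => e2
    | (j+3) => finCongr (by rw [show j + 3 = 3 + j by omega, hc3 j, hd3 j]), ?_⟩
  intro i x
  match i with
  | 0 => exact (sq0 x).symm
  | 1 => exact (sq1 x).symm
  | (j+2) =>
    have h1 : d.size (j + 2 + 1) = 1 := by
      rw [show j + 2 + 1 = 3 + j by omega]; exact hd3 j
    have : Subsingleton (Fin (d.size (j + 2 + 1))) := by
      rw [h1]; infer_instance
    exact Subsingleton.elim _ _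

end FCaux

namespace FCaux

lemma fib_fst {A : Type*} [Fintype A] {F : A → Type*} [∀ a, Fintype (F a)] (a : A) :
    fib (Sigma.fst : (Σ a, F a) → A) a =
      Finset.univ.map ⟨Sigma.mk a, sigma_mk_injective⟩ := by
  ext x
  simp only [mem_fib, Finset.mem_map, Finset.mem_univ, true_and,
    Function.Embedding.coeFn_mk]
  constructor
  · obtain ⟨a', y⟩ := x
    rintro rfl
    exact ⟨y, rfl⟩
  · rintro ⟨y, rfl⟩
    rfl

lemma fcard_fst {A : Type*} [Fintype A] {F : A → Type*} [∀ a, Fintype (F a)] (a : A) :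
    fcard (Sigma.fst : (Σ a, F a) → A) a = Fintype.card (F a) := by
  rw [fcard, fib_fst, Finset.card_map, Finset.card_univ]

lemma fibm_fst {A X : Type*} [Fintype A] {F : A → Type*} [∀ a, Fintype (F a)]
    (w : (Σ a, F a) → X) (a : A) :
    fibm (Sigma.fst : (Σ a, F a) → A) w a = tm (fun y : F a => w ⟨a, y⟩) := by
  rw [fibm, fib_fst, Finset.map_val, Multiset.map_map]
  rfl

lemma fst_surjective {A : Type*} {F : A → Type*} (h : ∀ a, Nonempty (F a)) :
    Function.Surjective (Sigma.fst : (Σ a, F a) → A) := by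
  intro a
  obtain ⟨y⟩ := h a
  exact ⟨⟨a, y⟩, rfl⟩

lemma tm_get {X : Type*} (l : List X) : tm l.get = (l : Multiset X) := by
  rw [tm, Fin.univ_def]
  show Multiset.map l.get (List.finRange l.length : List (Fin l.length)) = (l : Multiset X)
  rw [Multiset.map_coe, List.map_get_finRange]

namespace Build

variable (M0 : Multiset {q : Σ m : ℕ, Nat.Partition m // q.1 ≠ 0})

/-- A list enumeration of the multiset. -/
noncomputable def L : List {q : Σ m : ℕ, Nat.Partition m // q.1 ≠ 0} := M0.toList

/-- The list of parts of the `b`-th partition. -/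
noncomputable def pl (b : Fin (L M0).length) : List ℕ := ((L M0).get b).1.2.parts.toList

lemma pl_len_pos (b : Fin (L M0).length) : 0 < (pl M0 b).length := by
  rw [pl, Multiset.length_toList, Multiset.card_pos]
  intro h0
  apply ((L M0).get b).2
  rw [← ((L M0).get b).1.2.parts_sum, h0]
  rfl

lemma pl_get_pos (b : Fin (L M0).length) (j : Fin (pl M0 b).length) :
    0 < (pl M0 b).get j :=
  ((L M0).get b).1.2.parts_pos (by
    rw [← Multiset.mem_toList]
    exact List.get_mem (pl M0 b) j)

/-- The middle level: one point for each part of each partition. -/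
noncomputable abbrev A1 := Σ b : Fin (L M0).length, Fin (pl M0 b).length

/-- The bottom level: each part `p` blown up into `p` points. -/
noncomputable abbrev A0 := Σ x : A1 M0, Fin ((pl M0 x.1).get x.2)

lemma card_A0 {n : ℕ} (hsum : (M0.map (fun q => q.1.1)).sum = n) :
    Fintype.card (A0 M0) = n := by
  classical
  rw [Fintype.card_sigma]
  rw [show (∑ x : A1 M0, Fintype.card (Fin ((pl M0 x.1).get x.2)))
      = ∑ x : A1 M0, (pl M0 x.1).get x.2 by
    refine Finset.sum_congr rfl (fun x _ => Fintype.card_fin _)]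
  rw [← Finset.univ_sigma_univ, Finset.sum_sigma]
  have h1 : ∀ b : Fin (L M0).length,
      (∑ j : Fin (pl M0 b).length, (pl M0 b).get j) = ((L M0).get b).1.1 := by
    intro b
    have : (∑ j : Fin (pl M0 b).length, (pl M0 b).get j) = (pl M0 b).sum := by
      simpa using Fin.sum_univ_get (pl M0 b)
    rw [this, pl, Multiset.sum_toList]
    exact ((L M0).get b).1.2.parts_sum
  rw [Finset.sum_congr rfl (fun b _ => h1 b)]
  have h2 : (∑ b : Fin (L M0).length, ((L M0).get b).1.1)
      = ((L M0).map (fun q => q.1.1)).sum := by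
    simpa using Fin.sum_univ_fun_getElem (L M0) (fun q => q.1.1)
  rw [h2, L]
  have h3 := hsum
  rw [← Multiset.coe_toList M0, Multiset.map_coe, Multiset.sum_coe] at h3
  exact h3

end Build

end FCaux

namespace FCaux

namespace Build

variable (M0 : Multiset {q : Σ m : ℕ, Nat.Partition m // q.1 ≠ 0})

lemma L_len_pos {n : ℕ} (hn : 1 ≤ n) (hsum : (M0.map (fun q => q.1.1)).sum = n) :
    0 < (L M0).length := by
  rw [L, Multiset.length_toList, Multiset.card_pos]
  rintro rfl
  simp at hsum
  omega

/-- Sizes for the constructed chain. -/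
noncomputable def bsize (n : ℕ) : ℕ → ℕ
  | 0 => n
  | 1 => Fintype.card (A1 M0)
  | 2 => (L M0).length
  | _+3 => 1

/-- Bottom equivalence. -/
noncomputable def e0 {n : ℕ} (hsum : (M0.map (fun q => q.1.1)).sum = n) :
    A0 M0 ≃ Fin n := Fintype.equivFinOfCardEq (card_A0 M0 hsum)

/-- Middle equivalence. -/
noncomputable def e1 : A1 M0 ≃ Fin (Fintype.card (A1 M0)) := Fintype.equivFin _

/-- Maps for the constructed chain. -/
noncomputable def bmap {n : ℕ} (hsum : (M0.map (fun q => q.1.1)).sum = n) :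
    ∀ i, Fin (bsize M0 n i) → Fin (bsize M0 n (i+1))
  | 0 => fun x => e1 M0 ((e0 M0 hsum).symm x).1
  | 1 => fun x => ((e1 M0).symm x).1
  | 2 => fun _ => ⟨0, Nat.one_pos⟩
  | _+3 => fun x => x

/-- The chain constructed from a multiset of nonzero partitions. -/
noncomputable def build (n : ℕ) (hn : 1 ≤ n)
    (hsum : (M0.map (fun q => q.1.1)).sum = n) : FChain 3 n where
  size := bsize M0 n
  map := bmap M0 hsum
  surj := by
    intro i
    match i with
    | 0 =>
      intro y
      refine ⟨e0 M0 hsum ⟨(e1 M0).symm y, ⟨0, pl_get_pos M0 _ _⟩⟩, ?_⟩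
      show e1 M0 (((e0 M0 hsum).symm ((e0 M0 hsum) _)).1) = y
      rw [Equiv.symm_apply_apply]; exact (e1 M0).apply_symm_apply y
    | 1 =>
      intro y
      refine ⟨e1 M0 ⟨y, ⟨0, pl_len_pos M0 y⟩⟩, ?_⟩
      show ((e1 M0).symm ((e1 M0) _)).1 = y
      rw [Equiv.symm_apply_apply]
    | 2 =>
      intro y
      exact ⟨⟨0, L_len_pos M0 hn hsum⟩, Subsingleton.elim (α := Fin 1) _ _⟩
    | (j+3) => exact fun y => ⟨y, rfl⟩
  size_zero := rfl
  size_top := rfl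

lemma cInv_build {n : ℕ} (hn : 1 ≤ n)
    (hsum : (M0.map (fun q => q.1.1)).sum = n) :
    cInv (build M0 n hn hsum) = M0 := by
  have hf0 : Function.Surjective (Sigma.fst : A0 M0 → A1 M0) :=
    fst_surjective (fun x => ⟨⟨0, pl_get_pos M0 x.1 x.2⟩⟩)
  have hf1 : Function.Surjective (Sigma.fst : A1 M0 → Fin (L M0).length) :=
    fst_surjective (fun b => ⟨⟨0, pl_len_pos M0 b⟩⟩)
  have sq0 : ∀ a : A0 M0,
      (build M0 n hn hsum).map 0 ((e0 M0 hsum) a) = e1 M0 a.1 := by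
    intro a
    show e1 M0 (((e0 M0 hsum).symm ((e0 M0 hsum) a)).1) = e1 M0 a.1
    rw [Equiv.symm_apply_apply]
  have sq1 : ∀ b : A1 M0,
      (build M0 n hn hsum).map 1 ((e1 M0) b) = Equiv.refl (Fin (L M0).length) b.1 := by
    intro b
    show ((e1 M0).symm ((e1 M0) b)).1 = _
    rw [Equiv.symm_apply_apply]
    rfl
  rw [cInv]; refine (rawInv_trans (e0 M0 hsum) (e1 M0) (Equiv.refl (Fin (L M0).length))
    sq0 sq1 hf0 hf1 _ _).trans ?_
  rw [rawInv]
  have key : ∀ b : Fin (L M0).length,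
      mkQ (pA (Sigma.fst : A0 M0 → A1 M0) Sigma.fst b)
        (pA_pos _ hf0 b) (pA_ne _ hf1 b) = (L M0).get b := by
    intro b
    have hparts : pA (Sigma.fst : A0 M0 → A1 M0) Sigma.fst b
        = ((L M0).get b).1.2.parts := by
      rw [pA, fibm_fst]
      rw [show (fun j : Fin (pl M0 b).length =>
          fcard (Sigma.fst : A0 M0 → A1 M0) ⟨b, j⟩) = (pl M0 b).get from funext (fun j => by
        rw [fcard_fst, Fintype.card_fin])]
      rw [tm_get, pl, Multiset.coe_toList]
    have hp1 : ∀ x ∈ ((L M0).get b).1.2.parts, 0 < x :=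
      fun x hx => ((L M0).get b).1.2.parts_pos hx
    have hp2 : ((L M0).get b).1.2.parts ≠ 0 :=
      hparts ▸ pA_ne (Sigma.fst : A0 M0 → A1 M0) hf1 b
    exact (mkQ_eq_of hparts _ hp1 _ hp2).trans (mkQ_self _ hp1 hp2)
  rw [show (fun b => mkQ (pA (Sigma.fst : A0 M0 → A1 M0) Sigma.fst b)
      (pA_pos _ hf0 b) (pA_ne _ hf1 b)) = (fun b => (L M0).get b) from funext key]
  rw [show (fun b : Fin (L M0).length => (L M0).get b) = (L M0).get from rfl,
    tm_get, L, Multiset.coe_toList]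

end Build

end FCaux

/-- For n ≥ 1, Φ(3,n) equals the number of double partitions of n, i.e. the number
of finite multisets of nonzero integer partitions whose total sum is n. -/
theorem PhiBig_three_eq_double_partitions (n : ℕ) (hn : 1 ≤ n) :
    PhiBig 3 n =
      Nat.card {M : Multiset {q : Σ m : ℕ, Nat.Partition m // q.1 ≠ 0} //
        (M.map (fun q => q.1.1)).sum = n} := by
  rw [PhiBig]
  refine Nat.card_congr ?_
  exact
    { toFun := Quot.lift (fun c => ⟨FCaux.cInv c, FCaux.cInv_sum c⟩)
        (fun c d h => Subtype.ext (FCaux.cInv_iso h))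
      invFun := fun M => Quot.mk _ (FCaux.Build.build M.1 n hn M.2)
      left_inv := by
        refine fun q => Quot.inductionOn q (fun c => ?_)
        exact Quot.sound (FCaux.crux (FCaux.Build.cInv_build (FCaux.cInv c) hn
          (FCaux.cInv_sum c)))
      right_inv := fun M => Subtype.ext (FCaux.Build.cInv_build M.1 hn M.2) }
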